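/- Fix L ≥ 3, n ≥ 2, w* > 0, d > 0, and let a = (2−L)/L. For each C < 0 let σ_i(C) be the unique solution in (0, w*d/(n−1)) of (w*d − (n−1)σ)^a − σ^a = C, and set σ₁(C) = w*d − (n−1)σ_i(C). Then as C → −∞, σ_i(C) → 0 and σ₁(C) → w*d; consequently the ratio (σ₁² + (n−1)σ_i²)/σ₁² converges to 1. -/

import Mathlib

/-!
Since `a < 0`, the term `(w d − (n−1)σᵢ)^a` is positive, so the defining equation forces
`σᵢ^a ≥ −C`, i.e. `σᵢ ≤ (−C)^(1/a)`, and this bound tends to `0` as `C → −∞`.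
The limits of `σ₁` and of the stable rank follow by continuity, as `w d ≠ 0`.
-/

open Filter Topology

lemma Real.tendsto_neg_rpow_inv_atBot_of_neg {a : ℝ} (ha : a < 0) :
    Tendsto (fun C : ℝ => (-C) ^ a⁻¹) atBot (𝓝 0) := by
  have h := tendsto_rpow_neg_atTop (y := -a⁻¹) (by simpa using ha)
  rw [neg_neg] at h
  exact h.comp tendsto_neg_atBot_atTop

lemma le_neg_rpow_inv_of_rpow_sub_rpow_eq {K m s a C : ℝ} (hm : 0 < m) (ha : a < 0) (hC : C < 0)
    (hs : s ∈ Set.Ioo 0 (K / m)) (heq : (K - m * s) ^ a - s ^ a = C) :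
    s ≤ (-C) ^ a⁻¹ := by
  have hrest : 0 ≤ K - m * s := by
    have := (lt_div_iff₀ hm).mp hs.2
    linarith
  have hpow : 0 ≤ (K - m * s) ^ a := Real.rpow_nonneg hrest a
  rw [Real.le_rpow_inv_iff_of_neg hs.1 (neg_pos.mpr hC) ha]
  linarith

lemma tendsto_zero_of_rpow_sub_rpow_eq {K m a : ℝ} (hm : 0 < m) (ha : a < 0) {σ : ℝ → ℝ}
    (hσ : ∀ C < (0 : ℝ), σ C ∈ Set.Ioo 0 (K / m) ∧ (K - m * σ C) ^ a - σ C ^ a = C) :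
    Tendsto σ atBot (𝓝 0) := by
  have hneg : ∀ᶠ C in atBot, C < (0 : ℝ) := eventually_lt_atBot 0
  refine tendsto_of_tendsto_of_tendsto_of_le_of_le' tendsto_const_nhds
    (Real.tendsto_neg_rpow_inv_atBot_of_neg ha) ?_ ?_
  · filter_upwards [hneg] with C hC using (hσ C hC).1.1.le
  · filter_upwards [hneg] with C hC
    exact le_neg_rpow_inv_of_rpow_sub_rpow_eq hm ha hC (hσ C hC).1 (hσ C hC).2

/-- As the constant C → −∞, the unique solution σᵢ(C) ∈ (0, w*d/(n−1)) of
(w*d − (n−1)σ)^a − σ^a = C tends to 0, σ₁(C) = w*d − (n−1)σᵢ(C) tends to w*d,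
and the stable rank (σ₁² + (n−1)σᵢ²)/σ₁² tends to 1. -/
theorem stable_rank_tendsto_one (L n : ℕ) (hL : 3 ≤ L) (hn : 2 ≤ n)
    (w d : ℝ) (hw : 0 < w) (hd : 0 < d)
    (a : ℝ) (ha : a = ((2 : ℝ) - L) / L)
    (σi σ1 : ℝ → ℝ)
    (hσi : ∀ C < (0 : ℝ), σi C ∈ Set.Ioo 0 (w * d / ((n : ℝ) - 1)) ∧
      (w * d - ((n : ℝ) - 1) * σi C) ^ a - (σi C) ^ a = C)
    (hσ1 : ∀ C : ℝ, σ1 C = w * d - ((n : ℝ) - 1) * σi C) :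
    Filter.Tendsto σi Filter.atBot (nhds 0) ∧
    Filter.Tendsto σ1 Filter.atBot (nhds (w * d)) ∧
    Filter.Tendsto (fun C => ((σ1 C) ^ 2 + ((n : ℝ) - 1) * (σi C) ^ 2) / (σ1 C) ^ 2)
      Filter.atBot (nhds 1) := by
  have ha_neg : a < 0 := by
    have : (3 : ℝ) ≤ L := by exact_mod_cast hL
    rw [ha]
    exact div_neg_of_neg_of_pos (by linarith) (by linarith)
  have hm : (0 : ℝ) < n - 1 := by
    have : (2 : ℝ) ≤ n := by exact_mod_cast hn
    linarith
  have hσi_lim : Tendsto σi atBot (𝓝 0) := tendsto_zero_of_rpow_sub_rpow_eq hm ha_neg hσi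
  have hσ1_lim : Tendsto σ1 atBot (𝓝 (w * d)) := by
    rw [funext hσ1]
    simpa using tendsto_const_nhds.sub (tendsto_const_nhds.mul hσi_lim)
  refine ⟨hσi_lim, hσ1_lim, ?_⟩
  have hK : (w * d) ^ 2 ≠ 0 := by positivity
  have hnum : Tendsto (fun C => σ1 C ^ 2 + ((n : ℝ) - 1) * σi C ^ 2) atBot (𝓝 ((w * d) ^ 2)) := by
    simpa using (hσ1_lim.pow 2).add (tendsto_const_nhds.mul (hσi_lim.pow 2))
  have h := hnum.div (hσ1_lim.pow 2) hK
  rwa [div_self hK] at h
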